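/- arXiv:2401.16967 — 5 statements merged into one kernel-verified Lean document; each statement's English description precedes it below -/
import Mathlib

section
/- Let p1, p2, p3 be noncollinear points in ℝ² and let T be the (closed) triangle with these vertices, with area |T| = (1/2)|det(p2 − p1, p3 − p1)|. Let f : ℝ² → ℝ be a polynomial function of total degree at most 2, i.e. f(x, y) = a + b x + c y + d x² + e x y + g y² for real coefficients. Then the integral of f over T with respect to two-dimensional Lebesgue measure equals (|T|/3)·(f(x1) + f(x2) + f(x3)), where x1 = (2/3)p1 + (1/6)p2 + (1/6)p3, x2 = (1/6)p1 + (2/3)p2 + (1/6)p3 and x3 = (1/6)p1 + (1/6)p2 + (2/3)p3. (This is the exactness property of the three-point triangle quadrature rule used by the direct finite element method.) -/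
/-!
The affine map `u ↦ p1 + u.1 • (p2 - p1) + u.2 • (p3 - p1)` carries the reference triangle
`{u | 0 ≤ u.1, 0 ≤ u.2, u.1 + u.2 ≤ 1}` onto `T`, multiplies Lebesgue measure by
`|det| = 2 |T|`, sends `(1/6, 1/6)`, `(2/3, 1/6)`, `(1/6, 2/3)` to the three quadrature points,
and pulls quadratic polynomials back to quadratic polynomials. So it suffices to check the rule
on the reference triangle, where both sides are computed explicitly by Fubini.
-/

open MeasureTheory Set

theorem setIntegral_image_affine_eq_abs_det_smul {E F : Type*} [NormedAddCommGroup E]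
    [NormedSpace ℝ E] [FiniteDimensional ℝ E] [MeasurableSpace E] [BorelSpace E]
    [NormedAddCommGroup F] [NormedSpace ℝ F] (μ : Measure E) [μ.IsAddHaarMeasure]
    (p : E) (M : E →L[ℝ] E) {s : Set E} (hs : MeasurableSet s) (f : E → F) :
    ∫ x in (fun u => p + M u) '' s, f x ∂μ = |M.det| • ∫ u in s, f (p + M u) ∂μ := by
  rcases eq_or_ne M.det 0 with hdet | hdet
  · have hnull : μ ((fun u => p + M u) '' s) = 0 := by
      rw [← image_image (p + ·) M, image_add_left, measure_preimage_add,
        Measure.addHaar_image_continuousLinearMap, ← ContinuousLinearMap.det, hdet, abs_zero,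
        ENNReal.ofReal_zero, zero_mul]
    rw [setIntegral_measure_zero _ hnull, hdet, abs_zero, zero_smul]
  · have hinj : Function.Injective (fun u => p + M u) :=
      (add_right_injective p).comp (LinearMap.equivOfDetNeZero (M : E →ₗ[ℝ] E) hdet).injective
    rw [integral_image_eq_integral_abs_det_fderiv_smul μ hs
      (fun u _ => (M.hasFDerivAt.const_add p).hasFDerivWithinAt) hinj.injOn, integral_smul]

def refTriangle : Set (ℝ × ℝ) := {u | 0 ≤ u.1 ∧ 0 ≤ u.2 ∧ u.1 + u.2 ≤ 1}

lemma convex_refTriangle : Convex ℝ refTriangle := by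
  rintro u ⟨hu1, hu2, hu⟩ v ⟨hv1, hv2, hv⟩ s t hs ht hst
  refine ⟨?_, ?_, ?_⟩ <;>
    simp only [Prod.fst_add, Prod.snd_add, Prod.smul_fst, Prod.smul_snd, smul_eq_mul] <;>
    nlinarith

lemma convexHull_eq_refTriangle : convexHull ℝ {(0, 0), (1, 0), (0, 1)} = refTriangle := by
  refine (convexHull_min ?_ convex_refTriangle).antisymm ?_
  · rintro u (rfl | rfl | rfl) <;> norm_num [refTriangle]
  · rintro ⟨x, y⟩ ⟨hx, hy, hxy⟩
    dsimp only at hx hy hxy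
    have hmem := (convex_convexHull ℝ ({(0, 0), (1, 0), (0, 1)} : Set (ℝ × ℝ))).sum_mem
      (t := Finset.univ) (w := ![1 - x - y, x, y]) (z := ![(0, 0), (1, 0), (0, 1)])
      (fun i _ => by fin_cases i <;> simp <;> linarith) (by simp [Fin.sum_univ_three]; ring)
      (fun i _ => subset_convexHull ℝ _ (by fin_cases i <;> simp))
    simpa [Fin.sum_univ_three] using hmem

lemma isCompact_refTriangle : IsCompact refTriangle :=
  convexHull_eq_refTriangle ▸ (toFinite _).isCompact_convexHull ℝ

lemma mk_mem_refTriangle_iff (x y : ℝ) :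
    (x, y) ∈ refTriangle ↔ x ∈ Icc 0 1 ∧ y ∈ Icc 0 (1 - x) := by
  simp only [refTriangle, mem_ofPred_eq, mem_Icc]
  constructor
  · rintro ⟨hx, hy, hxy⟩
    exact ⟨⟨hx, by linarith⟩, hy, by linarith⟩
  · rintro ⟨⟨hx, -⟩, hy, hxy⟩
    exact ⟨hx, hy, by linarith⟩

lemma setIntegral_refTriangle {E : Type*} [NormedAddCommGroup E] [NormedSpace ℝ E]
    {h : ℝ × ℝ → E} (hh : Continuous h) :
    ∫ u in refTriangle, h u = ∫ x in (0:ℝ)..1, ∫ y in (0:ℝ)..(1 - x), h (x, y) := by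
  have hmeas : MeasurableSet refTriangle := isCompact_refTriangle.isClosed.measurableSet
  have hint : Integrable (refTriangle.indicator h) (volume.prod volume) := by
    rw [← Measure.volume_eq_prod, integrable_indicator_iff hmeas]
    exact hh.continuousOn.integrableOn_compact isCompact_refTriangle
  have hslice (x : ℝ) : ∫ y, refTriangle.indicator h (x, y) =
      (Icc 0 1).indicator (fun x => ∫ y in (0:ℝ)..(1 - x), h (x, y)) x := by
    by_cases hx : x ∈ Icc (0:ℝ) 1
    · have : (fun y => refTriangle.indicator h (x, y)) =
          (Icc 0 (1 - x)).indicator (fun y => h (x, y)) := by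
        ext y
        simp only [indicator, mk_mem_refTriangle_iff, hx, true_and]
      rw [this, integral_indicator measurableSet_Icc, indicator_of_mem hx,
        integral_Icc_eq_integral_Ioc, ← intervalIntegral.integral_of_le (by linarith [hx.2])]
    · have : (fun y => refTriangle.indicator h (x, y)) = 0 := by
        ext y
        simp [indicator, mk_mem_refTriangle_iff, hx]
      rw [this, indicator_of_notMem hx, integral_zero']
  rw [← integral_indicator hmeas, Measure.volume_eq_prod, integral_prod _ hint]
  simp_rw [hslice]
  rw [integral_indicator measurableSet_Icc, integral_Icc_eq_integral_Ioc,
    ← intervalIntegral.integral_of_le zero_le_one]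

lemma integral_cubic (A B C D t : ℝ) :
    ∫ y in (0:ℝ)..t, (A + B * y + C * y ^ 2 + D * y ^ 3) =
      A * t + B * t ^ 2 / 2 + C * t ^ 3 / 3 + D * t ^ 4 / 4 := by
  have hderiv (y : ℝ) :
      HasDerivAt (fun y => A * y + B * y ^ 2 / 2 + C * y ^ 3 / 3 + D * y ^ 4 / 4)
        (A + B * y + C * y ^ 2 + D * y ^ 3) y := by
    refine ((((hasDerivAt_id y).const_mul A).add
      (((hasDerivAt_pow 2 y).const_mul B).div_const 2)).add
      (((hasDerivAt_pow 3 y).const_mul C).div_const 3)).add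
      (((hasDerivAt_pow 4 y).const_mul D).div_const 4) |>.congr_deriv ?_
    norm_num
    ring
  rw [intervalIntegral.integral_eq_sub_of_hasDerivAt (fun y _ => hderiv y)
    (Continuous.intervalIntegrable (by fun_prop) _ _)]
  ring

def IsQuadratic (f : ℝ × ℝ → ℝ) : Prop :=
  ∃ a b c d e g : ℝ, ∀ x : ℝ × ℝ,
    f x = a + b * x.1 + c * x.2 + d * x.1 ^ 2 + e * x.1 * x.2 + g * x.2 ^ 2

theorem setIntegral_refTriangle_of_isQuadratic {f : ℝ × ℝ → ℝ} (hf : IsQuadratic f) :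
    ∫ u in refTriangle, f u = 1 / 6 * (f (1/6, 1/6) + f (2/3, 1/6) + f (1/6, 2/3)) := by
  obtain ⟨a, b, c, d, e, g, hf⟩ := hf
  obtain rfl : f = fun x => a + b * x.1 + c * x.2 + d * x.1 ^ 2 + e * x.1 * x.2 + g * x.2 ^ 2 :=
    funext hf
  have hslice (x : ℝ) :
      ∫ y in (0:ℝ)..(1 - x), (a + b * x + c * y + d * x ^ 2 + e * x * y + g * y ^ 2) =
        (a + c / 2 + g / 3) + (b - a - c + e / 2 - g) * x + (d - b + c / 2 - e + g) * x ^ 2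
          + (-d + e / 2 - g / 3) * x ^ 3 :=
    calc _ = ∫ y in (0:ℝ)..(1 - x),
          ((a + b * x + d * x ^ 2) + (c + e * x) * y + g * y ^ 2 + 0 * y ^ 3) :=
          intervalIntegral.integral_congr fun y _ => by ring
      _ = _ := by rw [integral_cubic]; ring
  rw [setIntegral_refTriangle (by fun_prop)]
  simp only [hslice, integral_cubic]
  ring

def pairMap (v w : ℝ × ℝ) : (ℝ × ℝ) →L[ℝ] ℝ × ℝ :=
  (ContinuousLinearMap.fst ℝ ℝ ℝ).smulRight v +
    (ContinuousLinearMap.snd ℝ ℝ ℝ).smulRight w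

@[simp] lemma pairMap_apply (v w u : ℝ × ℝ) : pairMap v w u = u.1 • v + u.2 • w := rfl

lemma det_pairMap (v w : ℝ × ℝ) : (pairMap v w).det = v.1 * w.2 - v.2 * w.1 := by
  rw [ContinuousLinearMap.det, ← LinearMap.det_toMatrix (Module.Basis.finTwoProd ℝ),
    Matrix.det_fin_two]
  simp [LinearMap.toMatrix_apply]
  ring

lemma convexHull_triangle_eq_image (p₁ p₂ p₃ : ℝ × ℝ) :
    convexHull ℝ {p₁, p₂, p₃} =
      (fun u => p₁ + pairMap (p₂ - p₁) (p₃ - p₁) u) '' refTriangle := by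
  let A : (ℝ × ℝ) →ᵃ[ℝ] ℝ × ℝ :=
    (pairMap (p₂ - p₁) (p₃ - p₁)).toLinearMap.toAffineMap + AffineMap.const ℝ _ p₁
  have hA : ⇑A = fun u => p₁ + pairMap (p₂ - p₁) (p₃ - p₁) u := by
    ext1 u
    simp [A, add_comm]
  rw [← hA, ← convexHull_eq_refTriangle, A.image_convexHull]
  simp [hA, image_insert_eq]

theorem IsQuadratic.comp_affine {f : ℝ × ℝ → ℝ} (hf : IsQuadratic f) (p v w : ℝ × ℝ) :
    IsQuadratic fun u => f (p + pairMap v w u) := by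
  obtain ⟨a, b, c, d, e, g, hf⟩ := hf
  refine ⟨a + b * p.1 + c * p.2 + d * p.1 ^ 2 + e * p.1 * p.2 + g * p.2 ^ 2,
    b * v.1 + c * v.2 + 2 * d * p.1 * v.1 + e * (p.1 * v.2 + p.2 * v.1) + 2 * g * p.2 * v.2,
    b * w.1 + c * w.2 + 2 * d * p.1 * w.1 + e * (p.1 * w.2 + p.2 * w.1) + 2 * g * p.2 * w.2,
    d * v.1 ^ 2 + e * v.1 * v.2 + g * v.2 ^ 2,
    2 * d * v.1 * w.1 + e * (v.1 * w.2 + v.2 * w.1) + 2 * g * v.2 * w.2,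
    d * w.1 ^ 2 + e * w.1 * w.2 + g * w.2 ^ 2, fun u => ?_⟩
  simp only [hf, pairMap_apply, Prod.fst_add, Prod.snd_add, Prod.smul_fst, Prod.smul_snd,
    smul_eq_mul]
  ring

theorem triangle_quadrature_exact_general
    (p1 p2 p3 : ℝ × ℝ)
    (f : ℝ × ℝ → ℝ) (a b c d e g : ℝ)
    (hf : ∀ x : ℝ × ℝ, f x = a + b * x.1 + c * x.2 + d * x.1 ^ 2 + e * x.1 * x.2 + g * x.2 ^ 2)
    (T : Set (ℝ × ℝ)) (hT : T = convexHull ℝ ({p1, p2, p3} : Set (ℝ × ℝ)))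
    (areaT : ℝ)
    (harea : areaT = (1 / 2) * |(p2.1 - p1.1) * (p3.2 - p1.2) - (p2.2 - p1.2) * (p3.1 - p1.1)|) :
    ∫ x in T, f x =
      (areaT / 3) *
        (f ((2/3 : ℝ) • p1 + (1/6 : ℝ) • p2 + (1/6 : ℝ) • p3) +
         f ((1/6 : ℝ) • p1 + (2/3 : ℝ) • p2 + (1/6 : ℝ) • p3) +
         f ((1/6 : ℝ) • p1 + (1/6 : ℝ) • p2 + (2/3 : ℝ) • p3)) := by
  set M := pairMap (p2 - p1) (p3 - p1)
  have hquad : IsQuadratic fun u => f (p1 + M u) :=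
    IsQuadratic.comp_affine ⟨a, b, c, d, e, g, hf⟩ _ _ _
  have hx₁ : p1 + M (1/6, 1/6) =
      (2/3 : ℝ) • p1 + (1/6 : ℝ) • p2 + (1/6 : ℝ) • p3 := by
    simp only [M, pairMap_apply]; module
  have hx₂ : p1 + M (2/3, 1/6) =
      (1/6 : ℝ) • p1 + (2/3 : ℝ) • p2 + (1/6 : ℝ) • p3 := by
    simp only [M, pairMap_apply]; module
  have hx₃ : p1 + M (1/6, 2/3) =
      (1/6 : ℝ) • p1 + (1/6 : ℝ) • p2 + (2/3 : ℝ) • p3 := by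
    simp only [M, pairMap_apply]; module
  rw [hT, convexHull_triangle_eq_image,
    setIntegral_image_affine_eq_abs_det_smul volume _ _
      isCompact_refTriangle.isClosed.measurableSet,
    setIntegral_refTriangle_of_isQuadratic hquad, hx₁, hx₂, hx₃, det_pairMap, harea,
    smul_eq_mul]
  simp only [Prod.fst_sub, Prod.snd_sub]
  ring

/-- Exactness of the three-point triangle quadrature rule for polynomials of
total degree at most 2. -/
theorem triangle_quadrature_exact
    (p1 p2 p3 : ℝ × ℝ)
    (hnc : ¬ Collinear ℝ ({p1, p2, p3} : Set (ℝ × ℝ)))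
    (f : ℝ × ℝ → ℝ) (a b c d e g : ℝ)
    (hf : ∀ x : ℝ × ℝ, f x = a + b * x.1 + c * x.2 + d * x.1 ^ 2 + e * x.1 * x.2 + g * x.2 ^ 2)
    (T : Set (ℝ × ℝ)) (hT : T = convexHull ℝ ({p1, p2, p3} : Set (ℝ × ℝ)))
    (areaT : ℝ)
    (harea : areaT = (1 / 2) * |(p2.1 - p1.1) * (p3.2 - p1.2) - (p2.2 - p1.2) * (p3.1 - p1.1)|) :
    ∫ x in T, f x =
      (areaT / 3) *
        (f ((2/3 : ℝ) • p1 + (1/6 : ℝ) • p2 + (1/6 : ℝ) • p3) +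
         f ((1/6 : ℝ) • p1 + (2/3 : ℝ) • p2 + (1/6 : ℝ) • p3) +
         f ((1/6 : ℝ) • p1 + (1/6 : ℝ) • p2 + (2/3 : ℝ) • p3)) :=
  triangle_quadrature_exact_general p1 p2 p3 f a b c d e g hf T hT areaT harea
end

section
/- Let p1, p2, p3 ∈ ℝ² be noncollinear points forming a triangle K; for i = 1, 2, 3 let e_i be the edge opposite p_i, m_i its midpoint, and n_i the outward unit normal of K on e_i. Let τ(x) = c + β x with c ∈ ℝ², β ∈ ℝ be a lowest-order Raviart–Thomas field. If τ(m_i) · n_i = 0 for all i = 1, 2, 3 (equivalently, the average of the normal component τ·n_i over each edge vanishes), then c = 0 and β = 0, i.e. τ ≡ 0. Hence a lowest-order Raviart–Thomas field on a nondegenerate triangle is uniquely determined by its three average normal fluxes over the edges. -/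
/-!
For the area form `ω` of the plane, a nonzero normal `n` of an edge `d` detects parallelism to `d`:
`⟪x, n⟫ = 0` forces `ω x d = 0`. So the vanishing fluxes say `ω (c + β mᵢ) eᵢ = 0` for every edge
vector `eᵢ`. Summing over the three edges, the `c`-terms cancel because the edge vectors sum to
zero, and `∑ ω mᵢ eᵢ` is twice the signed area of `K`, so `β = 0`. Then `c` is parallel to two
independent edges, hence `c = 0`.
-/

open scoped RealInnerProductSpace

open Module

theorem linearIndependent_vsub_of_not_collinear {k V P : Type*} [Field k] [AddCommGroup V]
    [Module k V] [AddTorsor V P] {p₁ p₂ p₃ : P} (h : ¬Collinear k ({p₁, p₂, p₃} : Set P)) :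
    LinearIndependent k ![p₂ -ᵥ p₁, p₃ -ᵥ p₁] := by
  rw [← affineIndependent_iff_not_collinear_set,
    affineIndependent_iff_linearIndependent_vsub k _ (0 : Fin 3),
    ← linearIndependent_equiv (finSuccAboveEquiv (0 : Fin 3))] at h
  convert! h
  ext i
  fin_cases i <;> rfl

namespace Orientation

variable {E : Type*} [NormedAddCommGroup E] [InnerProductSpace ℝ E] [Fact (finrank ℝ E = 2)]
  (o : Orientation ℝ E (Fin 2))

local notation "ω" => o.areaForm

theorem areaForm_eq_zero_of_inner_eq_zero {n x y : E} (hn : n ≠ 0) (hx : ⟪n, x⟫ = 0)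
    (hy : ⟪n, y⟫ = 0) : ω x y = 0 := by
  have h := o.inner_mul_areaForm_sub n x y
  rw [hx, hy, zero_mul, mul_zero, sub_zero] at h
  exact (mul_eq_zero.mp h.symm).resolve_left (by positivity)

theorem eq_zero_of_areaForm_eq_zero_of_linearIndependent {x u v : E}
    (huv : LinearIndependent ℝ ![u, v]) (hu : ω x u = 0) (hv : ω x v = 0) : x = 0 := by
  have hspan : Submodule.span ℝ (Set.range ![u, v]) = ⊤ :=
    huv.span_eq_top_of_card_eq_finrank (by rw [Fintype.card_fin, Fact.out (p := finrank ℝ E = 2)])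
  have hωx : ω x = 0 := by
    refine LinearMap.ext_on_range hspan fun i => ?_
    fin_cases i <;> simpa
  have := o.areaForm_rightAngleRotation_right x x
  rwa [hωx, LinearMap.zero_apply, eq_comm, inner_self_eq_zero] at this

theorem areaForm_ne_zero_of_linearIndependent {x y : E} (hxy : LinearIndependent ℝ ![x, y]) :
    ω x y ≠ 0 := fun h =>
  hxy.ne_zero 0 <|
    o.eq_zero_of_areaForm_eq_zero_of_linearIndependent hxy (o.areaForm_apply_self x) h

theorem areaForm_midpoint_edge_sum (c : E) (β : ℝ) (p₁ p₂ p₃ : E) :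
    ω (c + β • ((1 / 2 : ℝ) • (p₂ + p₃))) (p₃ - p₂) + ω (c + β • ((1 / 2 : ℝ) • (p₃ + p₁))) (p₁ - p₃)
      + ω (c + β • ((1 / 2 : ℝ) • (p₁ + p₂))) (p₂ - p₁) = β * ω (p₂ - p₁) (p₃ - p₁) := by
  simp only [map_add, map_sub, map_smul, LinearMap.add_apply, LinearMap.sub_apply,
    LinearMap.smul_apply, smul_eq_mul, areaForm_apply_self]
  rw [o.areaForm_swap p₃ p₂, o.areaForm_swap p₁ p₃, o.areaForm_swap p₂ p₁]
  ring

end Orientation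

theorem eq_zero_of_midpoint_normal_fluxes_eq_zero {E : Type*} [NormedAddCommGroup E]
    [InnerProductSpace ℝ E] [Fact (finrank ℝ E = 2)] {p₁ p₂ p₃ : E}
    (hK : ¬Collinear ℝ ({p₁, p₂, p₃} : Set E)) {n₁ n₂ n₃ : E} (hn₁ : n₁ ≠ 0) (hn₂ : n₂ ≠ 0)
    (hn₃ : n₃ ≠ 0) (he₁ : ⟪n₁, p₃ - p₂⟫ = 0) (he₂ : ⟪n₂, p₁ - p₃⟫ = 0)
    (he₃ : ⟪n₃, p₂ - p₁⟫ = 0) {c : E} {β : ℝ}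
    (h₁ : ⟪c + β • ((1 / 2 : ℝ) • (p₂ + p₃)), n₁⟫ = 0)
    (h₂ : ⟪c + β • ((1 / 2 : ℝ) • (p₃ + p₁)), n₂⟫ = 0)
    (h₃ : ⟪c + β • ((1 / 2 : ℝ) • (p₁ + p₂)), n₃⟫ = 0) :
    c = 0 ∧ β = 0 := by
  have : FiniteDimensional ℝ E := .of_fact_finrank_eq_two
  let o : Orientation ℝ E (Fin 2) := (finBasisOfFinrankEq ℝ E Fact.out).orientation
  have hflux {n d x : E} (hn : n ≠ 0) (hd : ⟪n, d⟫ = 0) (hx : ⟪x, n⟫ = 0) : o.areaForm x d = 0 :=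
    o.areaForm_eq_zero_of_inner_eq_zero hn (by rwa [real_inner_comm]) hd
  have hK' : LinearIndependent ℝ ![p₂ - p₁, p₃ - p₁] := by
    simpa only [vsub_eq_sub] using linearIndependent_vsub_of_not_collinear hK
  have hβ : β = 0 := by
    have hsum := o.areaForm_midpoint_edge_sum c β p₁ p₂ p₃
    rw [hflux hn₁ he₁ h₁, hflux hn₂ he₂ h₂, hflux hn₃ he₃ h₃, zero_add, zero_add, eq_comm] at hsum
    exact (mul_eq_zero.mp hsum).resolve_right (o.areaForm_ne_zero_of_linearIndependent hK')
  subst hβ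
  simp only [zero_smul, add_zero] at h₂ h₃
  refine ⟨o.eq_zero_of_areaForm_eq_zero_of_linearIndependent hK' (hflux hn₃ he₃ h₃) ?_, rfl⟩
  rw [← neg_sub, map_neg, hflux hn₂ he₂ h₂, neg_zero]

theorem rt_unisolvence_general
    (p1 p2 p3 : EuclideanSpace ℝ (Fin 2))
    (hnc : ¬ Collinear ℝ ({p1, p2, p3} : Set (EuclideanSpace ℝ (Fin 2))))
    -- outward unit normals: `n i` is a unit vector, orthogonal to the edge
    -- opposite `p i`, pointing away from `p i`
    (n1 n2 n3 : EuclideanSpace ℝ (Fin 2))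
    (hn1 : ‖n1‖ = 1) (hn1perp : ⟪n1, p3 - p2⟫ = 0)
    (hn2 : ‖n2‖ = 1) (hn2perp : ⟪n2, p1 - p3⟫ = 0)
    (hn3 : ‖n3‖ = 1) (hn3perp : ⟪n3, p2 - p1⟫ = 0)
    (c : EuclideanSpace ℝ (Fin 2)) (β : ℝ)
    (τ : EuclideanSpace ℝ (Fin 2) → EuclideanSpace ℝ (Fin 2))
    (hτ : ∀ x, τ x = c + β • x)
    (h1 : ⟪τ ((1/2 : ℝ) • (p2 + p3)), n1⟫ = 0)
    (h2 : ⟪τ ((1/2 : ℝ) • (p3 + p1)), n2⟫ = 0)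
    (h3 : ⟪τ ((1/2 : ℝ) • (p1 + p2)), n3⟫ = 0) :
    c = 0 ∧ β = 0 := by
  have : Fact (finrank ℝ (EuclideanSpace ℝ (Fin 2)) = 2) := ⟨finrank_euclideanSpace_fin⟩
  have unit_ne_zero {n : EuclideanSpace ℝ (Fin 2)} (hn : ‖n‖ = 1) : n ≠ 0 :=
    norm_ne_zero_iff.mp (hn ▸ one_ne_zero)
  rw [hτ] at h1 h2 h3
  exact eq_zero_of_midpoint_normal_fluxes_eq_zero hnc (unit_ne_zero hn1) (unit_ne_zero hn2)
    (unit_ne_zero hn3) hn1perp hn2perp hn3perp h1 h2 h3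

/-- Unisolvence of the lowest-order Raviart–Thomas element on a nondegenerate
triangle: if the midpoint normal flux `τ(m_i)·n_i` vanishes on all three edges,
then the field `τ(x) = c + β x` is identically zero, i.e. `c = 0` and `β = 0`. -/
theorem rt_unisolvence
    (p1 p2 p3 : EuclideanSpace ℝ (Fin 2))
    (hnc : ¬ Collinear ℝ ({p1, p2, p3} : Set (EuclideanSpace ℝ (Fin 2))))
    -- outward unit normals: `n i` is a unit vector, orthogonal to the edge
    -- opposite `p i`, pointing away from `p i`
    (n1 n2 n3 : EuclideanSpace ℝ (Fin 2))
    (hn1 : ‖n1‖ = 1) (hn1perp : ⟪n1, p3 - p2⟫ = 0)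
    (hn1out : ⟪n1, p1 - (1/2 : ℝ) • (p2 + p3)⟫ < 0)
    (hn2 : ‖n2‖ = 1) (hn2perp : ⟪n2, p1 - p3⟫ = 0)
    (hn2out : ⟪n2, p2 - (1/2 : ℝ) • (p3 + p1)⟫ < 0)
    (hn3 : ‖n3‖ = 1) (hn3perp : ⟪n3, p2 - p1⟫ = 0)
    (hn3out : ⟪n3, p3 - (1/2 : ℝ) • (p1 + p2)⟫ < 0)
    (c : EuclideanSpace ℝ (Fin 2)) (β : ℝ)
    (τ : EuclideanSpace ℝ (Fin 2) → EuclideanSpace ℝ (Fin 2))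
    (hτ : ∀ x, τ x = c + β • x)
    (h1 : ⟪τ ((1/2 : ℝ) • (p2 + p3)), n1⟫ = 0)
    (h2 : ⟪τ ((1/2 : ℝ) • (p3 + p1)), n2⟫ = 0)
    (h3 : ⟪τ ((1/2 : ℝ) • (p1 + p2)), n3⟫ = 0) :
    c = 0 ∧ β = 0 :=
  rt_unisolvence_general p1 p2 p3 hnc n1 n2 n3 hn1 hn1perp hn2 hn2perp hn3 hn3perp c β τ hτ h1 h2 h3
end

section
/- Let X and M be real Hilbert spaces, a : X × X → ℝ a bilinear form with |a(x, y)| ≤ C_a ‖x‖‖y‖ for all x, y ∈ X, and b : X × M → ℝ a bilinear form with |b(x, q)| ≤ C_b ‖x‖‖q‖ for all x ∈ X, q ∈ M. Let Z = {x ∈ X : b(x, q) = 0 for all q ∈ M}. Assume: (i) kernel coercivity: there is α > 0 with a(z, z) ≥ α ‖z‖² for all z ∈ Z; (ii) the inf-sup condition with constant β > 0: for every q ∈ M, sup over nonzero x ∈ X of b(x, q)/‖x‖ is at least β‖q‖. Then for every pair of bounded linear functionals f : X → ℝ and g : M → ℝ there exists a unique pair (u, p) ∈ X × M such that a(u, x)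 + b(x, p) = f(x) for all x ∈ X and b(u, q) = g(q) for all q ∈ M. -/
/-!
The Riesz representation turns `b` into an operator `T : M → X` with `⟪T q, x⟫ = b x q`, and the
inf-sup condition says exactly `β ‖q‖ ≤ ‖T q‖`. Hence the Gram form `⟪T q, T q'⟫` is coercive
on `M`, and Lax–Milgram for it solves every equation `⟪T q, T q₀⟫ = φ q`. This yields a `u₀` with
`b u₀ = g`; Lax–Milgram on the kernel `Z = T.rangeᗮ` of `b` corrects it to a `u` with
`b u = g` and `f - a u` vanishing on `Z`, and such a functional is of the form `b (·) p`.
Uniqueness follows by testing the homogeneous system with its own solution.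
-/

open RealInnerProductSpace InnerProductSpace

section

variable {X M : Type*}

theorem LinearMap.exists_continuous₂_eq_of_abs_le [SeminormedAddCommGroup X] [NormedSpace ℝ X]
    [SeminormedAddCommGroup M] [NormedSpace ℝ M] (b : X →ₗ[ℝ] M →ₗ[ℝ] ℝ) (C : ℝ)
    (hb : ∀ x q, |b x q| ≤ C * ‖x‖ * ‖q‖) :
    ∃ B : X →L[ℝ] M →L[ℝ] ℝ, ∀ x q, B x q = b x q :=
  ⟨b.mkContinuous₂ (max C 0) fun x q => (hb x q).trans <| by gcongr; exact le_max_left C 0,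
    fun _ _ => rfl⟩

theorem LinearMap.exists_inner_apply_eq_of_abs_le [NormedAddCommGroup X] [InnerProductSpace ℝ X]
    [CompleteSpace X] [SeminormedAddCommGroup M] [NormedSpace ℝ M] (b : X →ₗ[ℝ] M →ₗ[ℝ] ℝ)
    (C : ℝ) (hb : ∀ x q, |b x q| ≤ C * ‖x‖ * ‖q‖) :
    ∃ T : M →L[ℝ] X, ∀ q x, ⟪T q, x⟫ = b x q := by
  obtain ⟨B, hB⟩ := b.exists_continuous₂_eq_of_abs_le C hb
  exact ⟨(toDual ℝ X).symm.toContinuousLinearEquiv.toContinuousLinearMap ∘L B.flip,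
    fun q x => by simp [toDual_symm_apply, hB]⟩

theorem iSup_inner_div_norm_le [NormedAddCommGroup X] [InnerProductSpace ℝ X] (v : X) :
    ⨆ x : {x : X // x ≠ 0}, ⟪v, x⟫ / ‖(x : X)‖ ≤ ‖v‖ :=
  Real.iSup_le (fun x => div_le_of_le_mul₀ (norm_nonneg _) (norm_nonneg _)
    (real_inner_le_norm v x)) (norm_nonneg v)

theorem IsCoercive.exists_forall_apply_eq [NormedAddCommGroup X] [InnerProductSpace ℝ X]
    [CompleteSpace X] {B : X →L[ℝ] X →L[ℝ] ℝ} (hB : IsCoercive B) (φ : X →L[ℝ] ℝ) :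
    ∃ v, ∀ w, B v w = φ w :=
  ⟨hB.continuousLinearEquivOfBilin.symm ((toDual ℝ X).symm φ), fun w => by
    rw [← hB.continuousLinearEquivOfBilin_apply, ContinuousLinearEquiv.apply_symm_apply,
      toDual_symm_apply]⟩

theorem Submodule.exists_mem_forall_apply_eq_of_coercive [NormedAddCommGroup X]
    [InnerProductSpace ℝ X] (Z : Submodule ℝ X) [CompleteSpace Z] (A : X →L[ℝ] X →L[ℝ] ℝ)
    {α : ℝ} (hα : 0 < α) (hA : ∀ z ∈ Z, α * ‖z‖ ^ 2 ≤ A z z) (ℓ : X →L[ℝ] ℝ) :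
    ∃ w ∈ Z, ∀ z ∈ Z, A w z = ℓ z := by
  have hcoer : IsCoercive (A.bilinearComp Z.subtypeL Z.subtypeL) :=
    ⟨α, hα, fun z => by simpa [mul_assoc, ← sq] using hA z z.2⟩
  obtain ⟨w, hw⟩ := hcoer.exists_forall_apply_eq (ℓ ∘L Z.subtypeL)
  exact ⟨w, w.2, fun z hz => hw ⟨z, hz⟩⟩

namespace ContinuousLinearMap

variable [NormedAddCommGroup X] [InnerProductSpace ℝ X] [NormedAddCommGroup M]
  [InnerProductSpace ℝ M] (T : M →L[ℝ] X)

theorem mem_orthogonal_range_iff {z : X} : z ∈ T.rangeᗮ ↔ ∀ q, ⟪T q, z⟫ = 0 := by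
  simp [Submodule.mem_orthogonal]

variable {T} {β : ℝ} (hβ : 0 < β) (hT : ∀ q, β * ‖q‖ ≤ ‖T q‖)
include hβ hT

theorem eq_zero_of_forall_inner_apply_eq_zero {r : M} (hr : ∀ x, ⟪T r, x⟫ = 0) : r = 0 := by
  have hTr : ‖T r‖ = 0 := by rw [norm_eq_zero, ← inner_self_eq_zero (𝕜 := ℝ), hr]
  have hβr := hT r
  rw [hTr] at hβr
  exact norm_eq_zero.1 (le_antisymm (nonpos_of_mul_nonpos_right hβr hβ) (norm_nonneg r))

theorem exists_forall_inner_apply_apply_eq [CompleteSpace M] (φ : M →L[ℝ] ℝ) :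
    ∃ q₀, ∀ q, ⟪T q, T q₀⟫ = φ q := by
  have hgram : IsCoercive ((innerSL ℝ).bilinearComp T T) := by
    refine ⟨β ^ 2, by positivity, fun q => ?_⟩
    have := pow_le_pow_left₀ (by positivity) (hT q) 2
    simp only [bilinearComp_apply, innerSL_apply_apply, real_inner_self_eq_norm_sq]
    linarith
  obtain ⟨q₀, hq₀⟩ := hgram.exists_forall_apply_eq φ
  exact ⟨q₀, fun q => by simpa [real_inner_comm] using hq₀ q⟩

theorem exists_inner_apply_eq_of_forall_orthogonal_range [CompleteSpace X] [CompleteSpace M]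
    (ℓ : X →L[ℝ] ℝ) (hℓ : ∀ z ∈ T.rangeᗮ, ℓ z = 0) : ∃ p, ∀ x, ⟪T p, x⟫ = ℓ x := by
  -- No closed-range argument: `p` solves the Gram equation for `ℓ ∘ T`, and the remainder
  -- `L - T p` lies in `T.rangeᗮ`, hence is orthogonal to itself.
  obtain ⟨p, hp⟩ := exists_forall_inner_apply_apply_eq hβ hT (ℓ ∘L T)
  obtain ⟨L, hL⟩ : ∃ L : X, ∀ x, ⟪L, x⟫ = ℓ x := ⟨(toDual ℝ X).symm ℓ, fun _ => toDual_symm_apply⟩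
  have hr : L - T p ∈ T.rangeᗮ := (mem_orthogonal_range_iff T).2 fun q => by
    rw [inner_sub_right, real_inner_comm, hL, hp, comp_apply, sub_self]
  have hr0 : L - T p = 0 := by
    rw [← inner_self_eq_zero (𝕜 := ℝ)]
    nth_rw 1 [inner_sub_left]
    rw [hL, hℓ _ hr, (mem_orthogonal_range_iff T).1 hr p, sub_zero]
  refine ⟨p, fun x => ?_⟩
  rw [← sub_eq_zero.1 hr0, hL]

theorem exists_saddle_point [CompleteSpace X] [CompleteSpace M] (A : X →L[ℝ] X →L[ℝ] ℝ)
    {α : ℝ} (hα : 0 < α) (hA : ∀ z ∈ T.rangeᗮ, α * ‖z‖ ^ 2 ≤ A z z)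
    (f : X →L[ℝ] ℝ) (g : M →L[ℝ] ℝ) :
    ∃ u p, (∀ x, A u x + ⟪T p, x⟫ = f x) ∧ ∀ q, ⟪T q, u⟫ = g q := by
  obtain ⟨q₀, hq₀⟩ := exists_forall_inner_apply_apply_eq hβ hT g
  obtain ⟨w, hwZ, hw⟩ :=
    T.rangeᗮ.exists_mem_forall_apply_eq_of_coercive A hα hA (f - A (T q₀))
  have hbu : ∀ q, ⟪T q, T q₀ + w⟫ = g q := fun q => by
    rw [inner_add_right, hq₀, (mem_orthogonal_range_iff T).1 hwZ, add_zero]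
  obtain ⟨p, hp⟩ := exists_inner_apply_eq_of_forall_orthogonal_range hβ hT
    (f - A (T q₀ + w)) fun z hz => by simp [hw z hz]
  exact ⟨T q₀ + w, p, fun x => by simp [hp], hbu⟩

end ContinuousLinearMap

theorem saddle_point_unique [NormedAddCommGroup X] [Module ℝ X] [AddCommGroup M] [Module ℝ M]
    (a : X →ₗ[ℝ] X →ₗ[ℝ] ℝ) (b : X →ₗ[ℝ] M →ₗ[ℝ] ℝ) {α : ℝ} (hα : 0 < α)
    (hcoer : ∀ z : X, (∀ q : M, b z q = 0) → α * ‖z‖ ^ 2 ≤ a z z)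
    (hinj : ∀ r, (∀ x, b x r = 0) → r = 0) {f : X → ℝ} {g : M → ℝ} {u u' : X} {p p' : M}
    (hf : ∀ x, a u x + b x p = f x) (hg : ∀ q, b u q = g q)
    (hf' : ∀ x, a u' x + b x p' = f x) (hg' : ∀ q, b u' q = g q) : u' = u ∧ p' = p := by
  have hker : ∀ q, b (u' - u) q = 0 := fun q => by simp [hg, hg']
  have hdiff : ∀ x, a (u' - u) x + b x (p' - p) = 0 := fun x => by
    simp only [map_sub, LinearMap.sub_apply]
    linarith [hf x, hf' x]
  have hu : u' = u := by
    have hcoer' := hcoer _ hker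
    rw [eq_sub_of_add_eq (hdiff (u' - u)), hker, sub_zero] at hcoer'
    rw [← sub_eq_zero, ← norm_eq_zero]
    exact pow_eq_zero_iff two_ne_zero |>.1 <|
      le_antisymm (nonpos_of_mul_nonpos_right hcoer' hα) (sq_nonneg _)
  refine ⟨hu, sub_eq_zero.1 (hinj _ fun x => ?_)⟩
  simpa [hu] using hdiff x

end

/-- Babuška–Brezzi well-posedness of the saddle-point problem: under
boundedness of the bilinear forms, coercivity of `a` on the kernel of `b`,
and the inf-sup condition for `b`, for any bounded linear functionals `f, g`
there is a unique pair `(u, p)` with `a(u, x) + b(x, p) = f(x)` for all `x`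
and `b(u, q) = g(q)` for all `q`. -/
theorem brezzi_existence_uniqueness
    {X M : Type*}
    [NormedAddCommGroup X] [InnerProductSpace ℝ X] [CompleteSpace X]
    [NormedAddCommGroup M] [InnerProductSpace ℝ M] [CompleteSpace M]
    (a : X →ₗ[ℝ] X →ₗ[ℝ] ℝ) (b : X →ₗ[ℝ] M →ₗ[ℝ] ℝ)
    (Ca Cb α β : ℝ) (hα : 0 < α) (hβ : 0 < β)
    (ha_bdd : ∀ x y : X, |a x y| ≤ Ca * ‖x‖ * ‖y‖)
    (hb_bdd : ∀ (x : X) (q : M), |b x q| ≤ Cb * ‖x‖ * ‖q‖)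
    (hcoer : ∀ z : X, (∀ q : M, b z q = 0) → α * ‖z‖ ^ 2 ≤ a z z)
    (hinfsup : ∀ q : M, β * ‖q‖ ≤ ⨆ x : {x : X // x ≠ 0}, b x q / ‖(x : X)‖)
    (f : X →L[ℝ] ℝ) (g : M →L[ℝ] ℝ) :
    ∃! up : X × M,
      (∀ x : X, a up.1 x + b x up.2 = f x) ∧ (∀ q : M, b up.1 q = g q) := by
  obtain ⟨A, hA⟩ := a.exists_continuous₂_eq_of_abs_le Ca ha_bdd
  obtain ⟨T, hT⟩ := b.exists_inner_apply_eq_of_abs_le Cb hb_bdd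
  have hTβ : ∀ q, β * ‖q‖ ≤ ‖T q‖ := fun q =>
    (hinfsup q).trans <| by simpa only [hT] using iSup_inner_div_norm_le (T q)
  have hAα : ∀ z ∈ T.rangeᗮ, α * ‖z‖ ^ 2 ≤ A z z := fun z hz => by
    rw [hA]
    exact hcoer z fun q => by rw [← hT]; exact (T.mem_orthogonal_range_iff).1 hz q
  obtain ⟨u, p, hf, hg⟩ := T.exists_saddle_point hβ hTβ A hα hAα f g
  simp only [hA, hT] at hf hg
  refine ⟨(u, p), ⟨hf, hg⟩, fun ⟨u', p'⟩ ⟨hf', hg'⟩ => ?_⟩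
  have hinj : ∀ r, (∀ x, b x r = 0) → r = 0 := fun r hr =>
    T.eq_zero_of_forall_inner_apply_eq_zero hβ hTβ fun x => (hT r x).trans (hr x)
  obtain ⟨rfl, rfl⟩ := saddle_point_unique a b hα hcoer hinj hf hg hf' hg'
  rfl
end

section
/- Let X and M be real Hilbert spaces, a : X × X → ℝ bilinear with |a(x, y)| ≤ C_a ‖x‖‖y‖, b : X × M → ℝ bilinear with |b(x, q)| ≤ C_b ‖x‖‖q‖, Z = {x ∈ X : b(x, q) = 0 for all q ∈ M}, a(z, z) ≥ α‖z‖² for all z ∈ Z with α > 0, and b satisfying the inf-sup condition with constant β > 0. Let f : X → ℝ and g : M → ℝ be bounded linear functionals and (u, p) ∈ X × M a solution of a(u, x) + b(x, p) = f(x) for all x ∈ X and b(u, q) = g(q) for all q ∈ M. Then ‖u‖ ≤ α⁻¹‖f‖ + β⁻¹(1 + C_a/α)‖g‖ and ‖p‖ ≤ β⁻¹(1 + C_a/α)(‖f‖ + C_a β⁻¹ ‖g‖), where ‖f‖ and ‖g‖ denote operator norms of the functionals. -/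
/-!
The inf-sup condition says that the Riesz operator `T : M → X` of `b`, `⟪T q, x⟫ = b x q`, is
bounded below by `β`. Hence its range `R` is closed and `ker b = Rᗮ`, so `u = z + w` with `z` in
the kernel and `w = T q₀ ∈ R`; then `b w = g` and `‖w‖² = g q₀ ≤ ‖g‖ ‖w‖ / β`. Testing the first
equation with `z` and using kernel coercivity bounds `α ‖z‖` by `‖f‖ + Ca ‖w‖`, and the inf-sup
condition applied to `b · p = f - a u` bounds `β ‖p‖` by `‖f‖ + Ca ‖u‖`.
-/

open InnerProductSpace

/-- The supremum is taken in `ℝ`, so it is `0` when the quotients are unbounded or `X` is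
trivial. -/
def InfSup {X M : Type*} [NormedAddCommGroup X] [Norm M] (b : X → M → ℝ) (β : ℝ) : Prop :=
  ∀ q : M, β * ‖q‖ ≤ ⨆ x : {x : X // x ≠ 0}, b x q / ‖(x : X)‖

theorem mul_le_of_mul_sq_le {α c t : ℝ} (hc : 0 ≤ c) (ht : 0 ≤ t) (h : α * t ^ 2 ≤ c * t) :
    α * t ≤ c := by
  rcases ht.eq_or_lt with rfl | ht
  · simpa using hc
  · nlinarith

section InfSup

variable {X M : Type*} [NormedAddCommGroup X] [NormedAddCommGroup M]

theorem iSup_div_norm_le {φ : X → ℝ} {K : ℝ} (hK : 0 ≤ K) (h : ∀ x, φ x ≤ K * ‖x‖) :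
    ⨆ x : {x : X // x ≠ 0}, φ x / ‖(x : X)‖ ≤ K := by
  rcases isEmpty_or_nonempty {x : X // x ≠ 0} with hX | hX
  · simpa [Real.iSup_of_isEmpty] using hK
  · exact ciSup_le fun x => (div_le_iff₀ (norm_pos_iff.mpr x.2)).mpr (h x)

theorem nonneg_of_forall_abs_le_mul_norm_mul_norm [Nontrivial X] {φ : X → X → ℝ} {C : ℝ}
    (h : ∀ x y, |φ x y| ≤ C * ‖x‖ * ‖y‖) : 0 ≤ C := by
  obtain ⟨x, hx⟩ := exists_ne (0 : X)
  have hxx := (abs_nonneg _).trans (h x x)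
  rw [mul_assoc] at hxx
  exact nonneg_of_mul_nonneg_left hxx (mul_pos (norm_pos_iff.mpr hx) (norm_pos_iff.mpr hx))

theorem InfSup.subsingleton [Subsingleton X] {b : X → M → ℝ} {β : ℝ} (hβ : 0 < β)
    (hb : InfSup b β) : Subsingleton M := by
  refine ⟨fun q q' => ?_⟩
  have hX : IsEmpty {x : X // x ≠ 0} := ⟨fun x => x.2 (Subsingleton.elim _ _)⟩
  have h (q : M) : q = 0 := by
    have := hb q
    rw [Real.iSup_of_isEmpty] at this
    exact norm_le_zero_iff.mp (nonpos_of_mul_nonpos_right this hβ)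
  rw [h q, h q']

end InfSup

section Riesz

variable {X M : Type*} [NormedAddCommGroup X] [InnerProductSpace ℝ X] [CompleteSpace X]
  [NormedAddCommGroup M] [InnerProductSpace ℝ M]

noncomputable def bilinRiesz (B : X →L[ℝ] M →L[ℝ] ℝ) : M →L[ℝ] X :=
  (toDual ℝ X).symm.toContinuousLinearEquiv.toContinuousLinearMap.comp B.flip

variable (B : X →L[ℝ] M →L[ℝ] ℝ) {β : ℝ}

theorem inner_bilinRiesz_apply (q : M) (x : X) : ⟪bilinRiesz B q, x⟫_ℝ = B x q :=
  toDual_symm_apply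

theorem InfSup.mul_norm_le_norm_bilinRiesz (hB : InfSup (fun x q => B x q) β) (q : M) :
    β * ‖q‖ ≤ ‖bilinRiesz B q‖ :=
  (hB q).trans <| iSup_div_norm_le (norm_nonneg _) fun x =>
    inner_bilinRiesz_apply B q x ▸ real_inner_le_norm _ _

theorem InfSup.isClosed_range_bilinRiesz [CompleteSpace M] (hβ : 0 < β)
    (hB : InfSup (fun x q => B x q) β) : IsClosed (Set.range (bilinRiesz B)) := by
  have hanti : AntilipschitzWith ⟨β⁻¹, by positivity⟩ (bilinRiesz B) :=
    (bilinRiesz B).antilipschitz_of_bound fun q => by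
      change ‖q‖ ≤ β⁻¹ * _
      rw [inv_mul_eq_div, le_div_iff₀' hβ]
      exact hB.mul_norm_le_norm_bilinRiesz B q
  exact hanti.isClosed_range (bilinRiesz B).uniformContinuous

theorem apply_eq_zero_of_mem_orthogonal_range_bilinRiesz {z : X}
    (hz : z ∈ (bilinRiesz B).rangeᗮ) : B z = 0 := by
  ext q
  rw [← inner_bilinRiesz_apply]
  exact Submodule.inner_right_of_mem_orthogonal (LinearMap.mem_range_self _ q) hz

theorem InfSup.mul_norm_bilinRiesz_le_norm_apply (hβ : 0 ≤ β) (hB : InfSup (fun x q => B x q) β)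
    (q : M) :
    β * ‖bilinRiesz B q‖ ≤ ‖B (bilinRiesz B q)‖ := by
  set w := bilinRiesz B q
  refine mul_le_of_mul_sq_le (norm_nonneg _) (norm_nonneg w) ?_
  calc β * ‖w‖ ^ 2 = β * B w q := by rw [← inner_bilinRiesz_apply, real_inner_self_eq_norm_sq]
    _ ≤ β * (‖B w‖ * ‖q‖) := by gcongr; exact (le_abs_self _).trans ((B w).le_opNorm q)
    _ = ‖B w‖ * (β * ‖q‖) := by ring
    _ ≤ ‖B w‖ * ‖w‖ := by gcongr; exact hB.mul_norm_le_norm_bilinRiesz B q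

theorem InfSup.exists_kernel_decomposition [CompleteSpace M] (hβ : 0 < β)
    (hB : InfSup (fun x q => B x q) β) (u : X) :
    ∃ z w : X, z + w = u ∧ B z = 0 ∧ β * ‖w‖ ≤ ‖B w‖ := by
  set R := (bilinRiesz B).range
  have hR : IsClosed (R : Set X) := by
    rw [LinearMap.coe_range]; exact hB.isClosed_range_bilinRiesz B hβ
  have : CompleteSpace R := hR.completeSpace_coe
  obtain ⟨q, hq⟩ : R.starProjection u ∈ R := R.starProjection_apply_mem u
  refine ⟨u - R.starProjection u, R.starProjection u, sub_add_cancel _ _, ?_, ?_⟩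
  · exact apply_eq_zero_of_mem_orthogonal_range_bilinRiesz B (R.sub_starProjection_mem_orthogonal u)
  · rw [← hq]
    exact hB.mul_norm_bilinRiesz_le_norm_apply B hβ.le q

end Riesz

section SaddlePoint

variable {X M : Type*} [NormedAddCommGroup X] [InnerProductSpace ℝ X]
  [NormedAddCommGroup M] [InnerProductSpace ℝ M]
  {a : X →ₗ[ℝ] X →ₗ[ℝ] ℝ} {b : X →ₗ[ℝ] M →ₗ[ℝ] ℝ} {f : X →L[ℝ] ℝ} {u : X} {p : M} {Ca : ℝ}

theorem InfSup.mul_norm_multiplier_le {β : ℝ} (hb : InfSup (fun x q => b x q) β) (hCa : 0 ≤ Ca)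
    (ha : ∀ x y : X, |a x y| ≤ Ca * ‖x‖ * ‖y‖) (hu : ∀ x : X, a u x + b x p = f x) :
    β * ‖p‖ ≤ ‖f‖ + Ca * ‖u‖ := by
  refine (hb p).trans <| iSup_div_norm_le (φ := fun x => b x p) (by positivity) fun x => ?_
  calc b x p = f x - a u x := by rw [← hu x, add_sub_cancel_left]
    _ ≤ ‖f‖ * ‖x‖ + Ca * ‖u‖ * ‖x‖ := by
      linarith [(le_abs_self (f x)).trans (f.le_opNorm x), neg_abs_le (a u x), ha u x]
    _ = (‖f‖ + Ca * ‖u‖) * ‖x‖ := by ring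

theorem mul_norm_kernel_component_le {α : ℝ} (hCa : 0 ≤ Ca)
    (ha : ∀ x y : X, |a x y| ≤ Ca * ‖x‖ * ‖y‖) (hu : ∀ x : X, a u x + b x p = f x)
    {z w : X} (huzw : z + w = u) (hz : ∀ q : M, b z q = 0) (hcoer : α * ‖z‖ ^ 2 ≤ a z z) :
    α * ‖z‖ ≤ ‖f‖ + Ca * ‖w‖ := by
  refine mul_le_of_mul_sq_le (by positivity) (norm_nonneg z) ?_
  calc α * ‖z‖ ^ 2 ≤ a z z := hcoer
    _ = f z - a w z := by
      rw [← hu z, hz p, ← huzw, map_add, LinearMap.add_apply]; ring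
    _ ≤ ‖f‖ * ‖z‖ + Ca * ‖w‖ * ‖z‖ := by
      linarith [(le_abs_self (f z)).trans (f.le_opNorm z), neg_abs_le (a w z), ha w z]
    _ = (‖f‖ + Ca * ‖w‖) * ‖z‖ := by ring

end SaddlePoint

theorem stability_bounds_of_estimates {α β Ca F G U Z W P : ℝ} (hα : 0 < α) (hβ : 0 < β)
    (hCa : 0 ≤ Ca) (hU : U ≤ Z + W) (hZ : α * Z ≤ F + Ca * W) (hW : β * W ≤ G)
    (hP : β * P ≤ F + Ca * U) :
    U ≤ α⁻¹ * F + β⁻¹ * (1 + Ca / α) * G ∧ P ≤ β⁻¹ * (1 + Ca / α) * (F + Ca * β⁻¹ * G) := by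
  rw [mul_comm, ← le_div_iff₀ hα] at hZ
  rw [mul_comm, ← le_div_iff₀ hβ] at hW hP
  have hU' : U ≤ α⁻¹ * F + β⁻¹ * (1 + Ca / α) * G :=
    calc U ≤ (F + Ca * W) / α + W := by linarith
      _ = α⁻¹ * F + (1 + Ca / α) * W := by ring
      _ ≤ α⁻¹ * F + (1 + Ca / α) * (G / β) := by gcongr
      _ = α⁻¹ * F + β⁻¹ * (1 + Ca / α) * G := by ring
  refine ⟨hU', hP.trans ?_⟩
  calc (F + Ca * U) / β ≤ (F + Ca * (α⁻¹ * F + β⁻¹ * (1 + Ca / α) * G)) / β := by gcongr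
    _ = β⁻¹ * (1 + Ca / α) * (F + Ca * β⁻¹ * G) := by ring

/-- Explicit stability bounds for the saddle-point problem: under boundedness,
kernel coercivity of `a` and the inf-sup condition for `b`, any solution
`(u, p)` of `a(u, x) + b(x, p) = f(x)`, `b(u, q) = g(q)` satisfies
`‖u‖ ≤ α⁻¹‖f‖ + β⁻¹(1 + C_a/α)‖g‖` and
`‖p‖ ≤ β⁻¹(1 + C_a/α)(‖f‖ + C_a β⁻¹‖g‖)`. -/
theorem brezzi_stability
    {X M : Type*}
    [NormedAddCommGroup X] [InnerProductSpace ℝ X] [CompleteSpace X]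
    [NormedAddCommGroup M] [InnerProductSpace ℝ M] [CompleteSpace M]
    (a : X →ₗ[ℝ] X →ₗ[ℝ] ℝ) (b : X →ₗ[ℝ] M →ₗ[ℝ] ℝ)
    (Ca Cb α β : ℝ) (hα : 0 < α) (hβ : 0 < β)
    (ha_bdd : ∀ x y : X, |a x y| ≤ Ca * ‖x‖ * ‖y‖)
    (hb_bdd : ∀ (x : X) (q : M), |b x q| ≤ Cb * ‖x‖ * ‖q‖)
    (hcoer : ∀ z : X, (∀ q : M, b z q = 0) → α * ‖z‖ ^ 2 ≤ a z z)
    (hinfsup : ∀ q : M, β * ‖q‖ ≤ ⨆ x : {x : X // x ≠ 0}, b x q / ‖(x : X)‖)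
    (f : X →L[ℝ] ℝ) (g : M →L[ℝ] ℝ)
    (u : X) (p : M)
    (hu : ∀ x : X, a u x + b x p = f x)
    (hp : ∀ q : M, b u q = g q) :
    ‖u‖ ≤ α⁻¹ * ‖f‖ + β⁻¹ * (1 + Ca / α) * ‖g‖ ∧
    ‖p‖ ≤ β⁻¹ * (1 + Ca / α) * (‖f‖ + Ca * β⁻¹ * ‖g‖) := by
  have hb : InfSup (fun x q => b x q) β := hinfsup
  rcases subsingleton_or_nontrivial X with hX | hX
  · have : Subsingleton M := hb.subsingleton hβ
    simp [Subsingleton.elim u 0, Subsingleton.elim p 0, Subsingleton.elim f 0,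
      Subsingleton.elim g 0]
  have hCa : 0 ≤ Ca := nonneg_of_forall_abs_le_mul_norm_mul_norm ha_bdd
  set B : X →L[ℝ] M →L[ℝ] ℝ := b.mkContinuous₂ Cb hb_bdd
  obtain ⟨z, w, rfl, hBz, hBw⟩ := hb.exists_kernel_decomposition B hβ u
  have hz : ∀ q, b z q = 0 := fun q => congrArg (· q) hBz
  have hBwg : B w = g := by
    ext q
    simpa [B, hz] using hp q
  exact stability_bounds_of_estimates hα hβ hCa (norm_add_le z w)
    (mul_norm_kernel_component_le hCa ha_bdd hu rfl hz (hcoer z hz)) (hBwg ▸ hBw)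
    (hb.mul_norm_multiplier_le hCa ha_bdd hu)
end

section
/- (Fortin criterion.) Let X and M be real normed vector spaces, X_h ⊆ X and M_h ⊆ M subspaces, and b : X × M → ℝ a bilinear form. Assume: (i) for every q ∈ M_h, sup over nonzero x ∈ X of b(x, q)/‖x‖ ≥ β ‖q‖ for some β > 0; (ii) there is a linear map Π : X → X with range contained in X_h such that ‖Π x‖ ≤ C_Π ‖x‖ for all x ∈ X (with C_Π > 0) and b(x − Π x, q) = 0 for all x ∈ X and all q ∈ M_h. Then the discrete inf-sup condition holds with constant β/C_Π: for every q ∈ M_h, sup over nonzero y ∈ X_h of b(y, q)/‖y‖ ≥ (β/C_Π) ‖q‖. -/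
/-!
Since `b (Π x) q = b x q` with `Π x ∈ X_h` and `‖Π x‖ ≤ C_Π ‖x‖`, each ratio `b x q / ‖x‖` over
`X` is at most `C_Π` times the ratio of `Π x`, hence the supremum over `X` is at most `C_Π` times
the supremum over `X_h`; dividing the continuous inf-sup bound by `C_Π` gives the discrete one.
-/

section DivNormSup

variable {X : Type*} [NormedAddCommGroup X] [Module ℝ X]

/-- Replacing `y` by `-y` flips the sign of `f y / ‖y‖`, so some ratio is nonnegative. -/
lemma iSup_div_norm_nonneg (V : Submodule ℝ X) (f : X →ₗ[ℝ] ℝ) :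
    0 ≤ ⨆ y : {y : X // y ∈ V ∧ y ≠ 0}, f y / ‖(y : X)‖ := by
  rcases isEmpty_or_nonempty {y : X // y ∈ V ∧ y ≠ 0} with _ | ⟨⟨y, hyV, hy0⟩⟩
  · simp
  rcases le_total 0 (f y / ‖y‖) with hpos | hneg
  · exact Real.iSup_nonneg' ⟨⟨y, hyV, hy0⟩, hpos⟩
  · refine Real.iSup_nonneg' ⟨⟨-y, V.neg_mem hyV, neg_ne_zero.mpr hy0⟩, ?_⟩
    simpa only [map_neg, norm_neg, neg_div, le_neg, neg_zero] using hneg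

lemma le_iSup_div_norm_mul {V : Submodule ℝ X} {f : X →ₗ[ℝ] ℝ}
    (hbdd : BddAbove (Set.range fun y : {y : X // y ∈ V ∧ y ≠ 0} => f y / ‖(y : X)‖))
    {y : X} (hy : y ∈ V) :
    f y ≤ (⨆ y : {y : X // y ∈ V ∧ y ≠ 0}, f y / ‖(y : X)‖) * ‖y‖ := by
  rcases eq_or_ne y 0 with rfl | hy0
  · simp
  rw [← div_le_iff₀ (norm_pos_iff.mpr hy0)]
  exact le_ciSup hbdd ⟨y, hy, hy0⟩

lemma bddAbove_div_norm_of_submodule {V : Submodule ℝ X} {f : X →ₗ[ℝ] ℝ}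
    (hbdd : BddAbove (Set.range fun x : {x : X // x ≠ 0} => f x / ‖(x : X)‖)) :
    BddAbove (Set.range fun y : {y : X // y ∈ V ∧ y ≠ 0} => f y / ‖(y : X)‖) :=
  hbdd.mono <| by
    rintro _ ⟨⟨y, -, hy0⟩, rfl⟩
    exact ⟨⟨y, hy0⟩, rfl⟩

lemma iSup_div_norm_le_mul_of_bounded_proj (V : Submodule ℝ X) (f : X →ₗ[ℝ] ℝ)
    (proj : X →ₗ[ℝ] X) {C : ℝ} (hC : 0 ≤ C) (hrange : ∀ x, proj x ∈ V)
    (hbdd : ∀ x, ‖proj x‖ ≤ C * ‖x‖) (hf : ∀ x, f (proj x) = f x) :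
    (⨆ x : {x : X // x ≠ 0}, f x / ‖(x : X)‖) ≤
      C * ⨆ y : {y : X // y ∈ V ∧ y ≠ 0}, f y / ‖(y : X)‖ := by
  set S := ⨆ y : {y : X // y ∈ V ∧ y ≠ 0}, f y / ‖(y : X)‖
  have hS : 0 ≤ S := iSup_div_norm_nonneg V f
  by_cases hVbdd : BddAbove (Set.range fun y : {y : X // y ∈ V ∧ y ≠ 0} => f y / ‖(y : X)‖)
  · refine Real.iSup_le (fun ⟨x, hx0⟩ => ?_) (mul_nonneg hC hS)
    rw [div_le_iff₀ (norm_pos_iff.mpr hx0)]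
    calc f x = f (proj x) := (hf x).symm
      _ ≤ S * ‖proj x‖ := le_iSup_div_norm_mul hVbdd (hrange x)
      _ ≤ S * (C * ‖x‖) := mul_le_mul_of_nonneg_left (hbdd x) hS
      _ = C * S * ‖x‖ := by ring
  · -- In `ℝ` an unbounded `⨆` is `0`; the family over `X` contains the unbounded one over `V`.
    rw [Real.iSup_of_not_bddAbove (mt bddAbove_div_norm_of_submodule hVbdd)]
    exact mul_nonneg hC hS

end DivNormSup

theorem fortin_criterion_general
    {X M : Type*}
    [NormedAddCommGroup X] [NormedSpace ℝ X]
    [NormedAddCommGroup M] [NormedSpace ℝ M]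
    (Xh : Submodule ℝ X) (Mh : Submodule ℝ M)
    (b : X →ₗ[ℝ] M →ₗ[ℝ] ℝ)
    (β CPi : ℝ) (hCPi : 0 < CPi)
    (hinfsup : ∀ q ∈ Mh, β * ‖q‖ ≤ ⨆ x : {x : X // x ≠ 0}, b x q / ‖(x : X)‖)
    (proj : X →ₗ[ℝ] X)
    (hrange : ∀ x : X, proj x ∈ Xh)
    (hbdd : ∀ x : X, ‖proj x‖ ≤ CPi * ‖x‖)
    (hpres : ∀ x : X, ∀ q ∈ Mh, b (x - proj x) q = 0) :
    ∀ q ∈ Mh,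
      (β / CPi) * ‖q‖ ≤ ⨆ y : {y : X // y ∈ Xh ∧ y ≠ 0}, b y q / ‖(y : X)‖ := by
  intro q hq
  have hproj : ∀ x, b.flip q (proj x) = b.flip q x := fun x => by
    have := hpres x q hq
    rw [map_sub, LinearMap.sub_apply, sub_eq_zero] at this
    exact this.symm
  have hsup := iSup_div_norm_le_mul_of_bounded_proj Xh (b.flip q) proj hCPi.le hrange hbdd hproj
  simp only [LinearMap.flip_apply] at hsup
  rw [div_mul_eq_mul_div, div_le_iff₀ hCPi]
  linarith [hinfsup q hq]

/-- Fortin criterion: if `b` satisfies the inf-sup condition over `X × M_h`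
with constant `β`, and there is a bounded linear operator `proj : X → X` with
range in `X_h` preserving the form (`b(x − proj x, q) = 0` for all `q ∈ M_h`),
then the discrete inf-sup condition holds with constant `β / C_Π`. -/
theorem fortin_criterion
    {X M : Type*}
    [NormedAddCommGroup X] [NormedSpace ℝ X]
    [NormedAddCommGroup M] [NormedSpace ℝ M]
    (Xh : Submodule ℝ X) (Mh : Submodule ℝ M)
    (b : X →ₗ[ℝ] M →ₗ[ℝ] ℝ)
    (β CPi : ℝ) (hβ : 0 < β) (hCPi : 0 < CPi)
    (hinfsup : ∀ q ∈ Mh, β * ‖q‖ ≤ ⨆ x : {x : X // x ≠ 0}, b x q / ‖(x : X)‖)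
    (proj : X →ₗ[ℝ] X)
    (hrange : ∀ x : X, proj x ∈ Xh)
    (hbdd : ∀ x : X, ‖proj x‖ ≤ CPi * ‖x‖)
    (hpres : ∀ x : X, ∀ q ∈ Mh, b (x - proj x) q = 0) :
    ∀ q ∈ Mh,
      (β / CPi) * ‖q‖ ≤ ⨆ y : {y : X // y ∈ Xh ∧ y ≠ 0}, b y q / ‖(y : X)‖ :=
  fortin_criterion_general Xh Mh b β CPi hCPi hinfsup proj hrange hbdd hpres
end
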